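/- arXiv:1903.10076 — 3 statements merged into one kernel-verified Lean document; each statement's English description precedes it below -/
import Mathlib

section
/- Change-of-variables for the 1D pullback metric: if T_θ : ℝ → ℝ is smooth in θ ∈ ℝᵐ, strictly increasing in x, and p is a probability density on ℝ, then for the solution ψ_k of (ρ_θ ψ_k')' = (ρ_θ ∂_{θ_k}T_θ(T_θ⁻¹(·)))' with decay at infinity, ψ_k'(T_θ(x)) = ∂_{θ_k}T_θ(x), and hence G_{ij}(θ) = ∫ ∂_{θ_i}T_θ(x) ∂_{θ_j}T_θ(x) p(x) dx. -/
open Real MeasureTheory Filter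

/-- Partial derivative of `T` in the parameter direction `θ_k`. -/
noncomputable def dparam {m : ℕ} (T : (Fin m → ℝ) → ℝ → ℝ) (θ : Fin m → ℝ)
    (k : Fin m) (x : ℝ) : ℝ :=
  fderiv ℝ (fun θ' => T θ' x) θ (Pi.single k 1)

/-- Change of variables for the 1D pullback Wasserstein metric: if `ψ_k` solves
`(ρ_θ ψ_k')' = (ρ_θ ∂_{θ_k}T_θ(T_θ⁻¹(·)))'` with decay at infinity, then
`ψ_k'(T_θ(x)) = ∂_{θ_k}T_θ(x)`, and hence
`G_{ij}(θ) = ∫ ∂_{θ_i}T_θ ∂_{θ_j}T_θ p dx`. -/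
theorem pullback_metric_one_dim (m : ℕ) (T : (Fin m → ℝ) → ℝ → ℝ) (θ : Fin m → ℝ)
    (hTsmooth : ∀ x, ContDiff ℝ (⊤ : ℕ∞) (fun θ' => T θ' x))
    (hTmono : StrictMono (T θ))
    (p : ℝ → ℝ) (hp : ∀ x, 0 ≤ p x) (hpint : Integrable p) (hpone : ∫ x, p x = 1)
    (ρθ : ℝ → ℝ) (hρpos : ∀ y, 0 < ρθ y)
    (hρdecay_bot : Tendsto ρθ atBot (nhds 0)) (hρdecay_top : Tendsto ρθ atTop (nhds 0))
    (hpush : ∀ x, ρθ (T θ x) * deriv (T θ) x = p x)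
    (Tinv : ℝ → ℝ) (hTinv : ∀ x, Tinv (T θ x) = x) (hTinv' : ∀ y, T θ (Tinv y) = y)
    (ψ : Fin m → ℝ → ℝ)
    (hψdiff : ∀ k, Differentiable ℝ (ψ k))
    (hdiff1 : ∀ k, Differentiable ℝ (fun z => ρθ z * deriv (ψ k) z))
    (hdiff2 : ∀ k, Differentiable ℝ (fun z => ρθ z * dparam T θ k (Tinv z)))
    (hode : ∀ k y, deriv (fun z => ρθ z * deriv (ψ k) z) y
      = deriv (fun z => ρθ z * dparam T θ k (Tinv z)) y)
    (hdecay : ∀ k, Tendsto (fun z => ρθ z * deriv (ψ k) z) atBot (nhds 0) ∧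
      Tendsto (fun z => ρθ z * dparam T θ k (Tinv z)) atBot (nhds 0)) :
    (∀ k x, deriv (ψ k) (T θ x) = dparam T θ k x) ∧
    (∀ i j, (∫ x, deriv (ψ i) (T θ x) * deriv (ψ j) (T θ x) * p x)
      = ∫ x, dparam T θ i x * dparam T θ j x * p x) := by
  have key : ∀ k z, ρθ z * deriv (ψ k) z = ρθ z * dparam T θ k (Tinv z) := by
    intro k z
    set f := fun z => ρθ z * deriv (ψ k) z with hf
    set g := fun z => ρθ z * dparam T θ k (Tinv z) with hg
    have hF : Differentiable ℝ (fun z => f z - g z) := (hdiff1 k).sub (hdiff2 k)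
    have hder : ∀ y, deriv (fun z => f z - g z) y = 0 := by
      intro y
      rw [deriv_fun_sub ((hdiff1 k) y) ((hdiff2 k) y), hode k y, sub_self]
    have hconst : ∀ a b : ℝ, f a - g a = f b - g b :=
      is_const_of_deriv_eq_zero hF hder
    have htend : Tendsto (fun z => f z - g z) atBot (nhds 0) := by
      simpa using (hdecay k).1.sub (hdecay k).2
    have hconst' : (fun z' => f z' - g z') =ᶠ[atBot] (fun _ => f z - g z) := by
      filter_upwards with a using hconst a z
    have := (htend.congr' hconst').limUnder_eq
    have h0 : f z - g z = 0 := by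
      have h2 := tendsto_const_nhds (α := ℝ) (x := f z - g z) (f := atBot)
      exact tendsto_nhds_unique h2 (htend.congr fun a => hconst a z ▸ rfl)
    exact sub_eq_zero.mp h0
  have main : ∀ k x, deriv (ψ k) (T θ x) = dparam T θ k x := by
    intro k x
    have h := key k (T θ x)
    rw [hTinv x] at h
    exact mul_left_cancel₀ (ne_of_gt (hρpos (T θ x))) h
  refine ⟨main, fun i j => ?_⟩
  congr 1
  funext x
  rw [main i x, main j x]
end

section
/- Weak continuity equation for parametrized pushforwards: if θ_t is a differentiable curve in ℝᵐ and ρ_t is the density of the pushforward of p by T_{θ_t}, then for every test function φ ∈ C_c^∞(ℝᵈ), d/dt ∫ φ dρ_t = ∫ θ̇_tᵀ ∂_θT_{θ_t}(x) ∇φ(T_{θ_t}(x)) dp(x); i.e. ρ_t weakly solves ∂_t ρ_t + ∇·(ρ_t v_t) = 0 with velocity field v_t(y) = ∂_θT_{θ_t}(T_{θ_t}⁻¹(y))ᵀ θ̇_t. -/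
open MeasureTheory Matrix

/-- Partial derivative of `T` in the parameter direction `θ_k`, `j`-th component. -/
noncomputable def dparamT {m d : ℕ} (T : (Fin m → ℝ) → (Fin d → ℝ) → (Fin d → ℝ))
    (θ : Fin m → ℝ) (x : Fin d → ℝ) : Matrix (Fin m) (Fin d) ℝ :=
  fun k j => fderiv ℝ (fun θ' => T θ' x j) θ (Pi.single k 1)

/-- Euclidean gradient of `φ : ℝᵈ → ℝ`. -/
noncomputable def egrad {d : ℕ} (φ : (Fin d → ℝ) → ℝ) (y : Fin d → ℝ) : Fin d → ℝ :=
  fun j => fderiv ℝ φ y (Pi.single j 1)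

/-- A continuous linear map on `Fin n → ℝ` is determined by its values on the basis. -/
lemma clm_apply_eq_sum {n : ℕ} {E : Type*} [NormedAddCommGroup E] [NormedSpace ℝ E]
    (L : (Fin n → ℝ) →L[ℝ] E) (v : Fin n → ℝ) :
    L v = ∑ i, v i • L (Pi.single i 1) := by
  have hv : v = ∑ i, v i • (Pi.single i 1 : Fin n → ℝ) := by
    ext j
    simp [Finset.sum_apply, Pi.single_apply]
  conv_lhs => rw [hv]
  rw [map_sum]
  simp

/-- Pointwise chain rule giving the derivative of `s ↦ φ (T (θ s) x)`. -/
lemma pointwise_deriv {d m : ℕ}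
    (T : (Fin m → ℝ) → (Fin d → ℝ) → (Fin d → ℝ))
    (hTsmooth : ContDiff ℝ (⊤ : ℕ∞) (fun q : (Fin m → ℝ) × (Fin d → ℝ) => T q.1 q.2))
    (θ θdot : ℝ → Fin m → ℝ)
    (hθ : ∀ t i, HasDerivAt (fun s => θ s i) (θdot t i) t)
    (φ : (Fin d → ℝ) → ℝ) (hφ : ContDiff ℝ (⊤ : ℕ∞) φ) (x : Fin d → ℝ) (t : ℝ) :
    HasDerivAt (fun s => φ (T (θ s) x))
      (θdot t ⬝ᵥ (dparamT T (θ t) x).mulVec (egrad φ (T (θ t) x))) t := by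
  have hθt : HasDerivAt (fun s => θ s) (θdot t) t := hasDerivAt_pi.mpr (hθ t)
  have hTx : ContDiff ℝ (⊤ : ℕ∞) (fun θ' => T θ' x) := by
    have : ContDiff ℝ (⊤ : ℕ∞) (fun θ' : Fin m → ℝ => (θ', x)) := contDiff_id.prodMk contDiff_const
    exact hTsmooth.comp this
  have hTfd : HasFDerivAt (fun θ' => T θ' x) (fderiv ℝ (fun θ' => T θ' x) (θ t)) (θ t) :=
    ((hTx.differentiable (by simp)) (θ t)).hasFDerivAt
  set y := T (θ t) x with hy
  set Dθ := fderiv ℝ (fun θ' => T θ' x) (θ t) with hDθ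
  have hcomp : HasDerivAt (fun s => T (θ s) x) (Dθ (θdot t)) t :=
    hTfd.comp_hasDerivAt t hθt
  have hφfd : HasFDerivAt φ (fderiv ℝ φ y) y := ((hφ.differentiable (by simp)) y).hasFDerivAt
  have h : HasDerivAt (fun s => φ (T (θ s) x)) (fderiv ℝ φ y (Dθ (θdot t))) t :=
    hφfd.comp_hasDerivAt t hcomp
  convert h using 1
  -- component-wise fderiv
  have hproj : ∀ j : Fin d, ∀ v : Fin m → ℝ,
      fderiv ℝ (fun θ' => T θ' x j) (θ t) v = Dθ v j := by
    intro j v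
    have hp : HasFDerivAt ⇑(ContinuousLinearMap.proj j : (Fin d → ℝ) →L[ℝ] ℝ)
        (ContinuousLinearMap.proj j : (Fin d → ℝ) →L[ℝ] ℝ) (T (θ t) x) :=
      ContinuousLinearMap.hasFDerivAt _
    have h2 : HasFDerivAt (fun θ' => T θ' x j)
        ((ContinuousLinearMap.proj j).comp Dθ) (θ t) := HasFDerivAt.comp (g := ⇑(ContinuousLinearMap.proj j : (Fin d → ℝ) →L[ℝ] ℝ)) (θ t) hp hTfd
    rw [h2.fderiv]
    rfl
  have expand : fderiv ℝ φ y (Dθ (θdot t))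
      = ∑ j, (Dθ (θdot t)) j * egrad φ y j := by
    rw [clm_apply_eq_sum (fderiv ℝ φ y) (Dθ (θdot t))]
    simp [egrad, smul_eq_mul]
  have expand2 : ∀ j : Fin d, (Dθ (θdot t)) j = ∑ k, θdot t k * dparamT T (θ t) x k j := by
    intro j
    rw [← hproj j (θdot t), clm_apply_eq_sum]
    simp [dparamT, hproj, smul_eq_mul]
  rw [expand]
  simp only [expand2, dotProduct, Matrix.mulVec, Finset.mul_sum, Finset.sum_mul, mul_assoc]
  exact Finset.sum_comm

/-- Weak continuity equation for parametrized pushforwards: for a differentiable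
parameter curve `θ_t` and every test function `φ ∈ C_c^∞`,
`d/dt ∫ φ d(T_{θ_t})_#p = ∫ θ̇_tᵀ ∂_θT_{θ_t}(x) ∇φ(T_{θ_t}(x)) dp(x)`. -/
theorem weak_continuity_equation (d m : ℕ) (p : Measure (Fin d → ℝ))
    [IsProbabilityMeasure p]
    (hmom : Integrable (fun x => ‖x‖ ^ 2) p)
    (T : (Fin m → ℝ) → (Fin d → ℝ) → (Fin d → ℝ))
    (hTsmooth : ContDiff ℝ (⊤ : ℕ∞) (fun q : (Fin m → ℝ) × (Fin d → ℝ) => T q.1 q.2))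
    (hTbij : ∀ θ', Function.Bijective (T θ'))
    (θ θdot : ℝ → Fin m → ℝ)
    (hθ : ∀ t i, HasDerivAt (fun s => θ s i) (θdot t i) t)
    (φ : (Fin d → ℝ) → ℝ) (hφ : ContDiff ℝ (⊤ : ℕ∞) φ) (hφsupp : HasCompactSupport φ)
    (hdom : ∃ g : (Fin d → ℝ) → ℝ, Integrable g p ∧ ∀ s x,
      |θdot s ⬝ᵥ (dparamT T (θ s) x).mulVec (egrad φ (T (θ s) x))| ≤ g x) :
    ∀ t, HasDerivAt (fun s => ∫ x, φ (T (θ s) x) ∂p)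
      (∫ x, θdot t ⬝ᵥ (dparamT T (θ t) x).mulVec (egrad φ (T (θ t) x)) ∂p) t := by
  intro t
  obtain ⟨g, hg_int, hg_bound⟩ := hdom
  have hTcont : Continuous (fun q : (Fin m → ℝ) × (Fin d → ℝ) => T q.1 q.2) :=
    hTsmooth.continuous
  have hφcont : Continuous φ := hφ.continuous
  -- continuity of the map x ↦ F s x for each s
  have hFcont : ∀ s : ℝ, Continuous fun x => φ (T (θ s) x) := by
    intro s
    exact hφcont.comp (hTcont.comp (continuous_const.prodMk continuous_id))
  -- continuity of the derivative integrand in x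
  have hF'cont : ∀ s : ℝ, Continuous fun x =>
      θdot s ⬝ᵥ (dparamT T (θ s) x).mulVec (egrad φ (T (θ s) x)) := by
    intro s
    have hM : ∀ k j, Continuous fun x => dparamT T (θ s) x k j := by
      intro k j
      have huncurry : ContDiff ℝ (⊤ : ℕ∞) (Function.uncurry fun (x : Fin d → ℝ) (θ' : Fin m → ℝ)
          => T θ' x j) := by
        have : ContDiff ℝ (⊤ : ℕ∞) (fun q : (Fin d → ℝ) × (Fin m → ℝ) => T q.2 q.1) :=
          hTsmooth.comp (contDiff_snd.prodMk contDiff_fst)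
        exact (contDiff_apply ℝ ℝ j).comp this
      have hcd : ContDiff ℝ (⊤ : ℕ∞) fun x : Fin d → ℝ =>
          fderiv ℝ (fun θ' => T θ' x j) (θ s) :=
        huncurry.fderiv (contDiff_const : ContDiff ℝ (⊤ : ℕ∞) fun _ : Fin d → ℝ => θ s) (by simp)
      exact hcd.continuous.clm_apply continuous_const
    have hG : ∀ j, Continuous fun x => egrad φ (T (θ s) x) j := by
      intro j
      have hcd : ContDiff ℝ (⊤ : ℕ∞) fun x : Fin d → ℝ => fderiv ℝ φ (T (θ s) x) := by
        apply (hφ.fderiv_right (le_refl _)).comp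
        exact hTsmooth.comp (contDiff_const.prodMk contDiff_id)
      exact hcd.continuous.clm_apply continuous_const
    unfold dotProduct Matrix.mulVec
    apply continuous_finset_sum
    intro k _
    apply Continuous.mul continuous_const
    unfold dotProduct
    apply continuous_finset_sum
    intro j _
    exact (hM k j).mul (hG j)
  -- bound on φ
  obtain ⟨C, hC⟩ := hφcont.bounded_above_of_compact_support hφsupp
  have key := hasDerivAt_integral_of_dominated_loc_of_deriv_le (μ := p)
    (F := fun s x => φ (T (θ s) x))
    (F' := fun s x => θdot s ⬝ᵥ (dparamT T (θ s) x).mulVec (egrad φ (T (θ s) x)))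
    (x₀ := t) (bound := g) (s := Metric.ball t 1) (Metric.ball_mem_nhds t one_pos)
    (Filter.Eventually.of_forall fun s => (hFcont s).aestronglyMeasurable)
    ?_ ((hF'cont t).aestronglyMeasurable)
    (Filter.Eventually.of_forall fun x s _ => by
      rw [Real.norm_eq_abs]; exact hg_bound s x)
    hg_int
    (Filter.Eventually.of_forall fun x s _ =>
      pointwise_deriv T hTsmooth θ θdot hθ φ hφ x s)
  · exact key.2
  · apply (integrable_const C).mono' ((hFcont t).aestronglyMeasurable)
    exact Filter.Eventually.of_forall fun x => hC _
end

section
/- Along the flow Γ' = −Σ⁻¹Γ + βΓ^{-T}, b' = Σ⁻¹(μ−b), the relative entropy, which up to an additive constant C is F(Γ, b) = ½tr(Σ⁻¹ΓΓᵀ) + ½(b−μ)ᵀΣ⁻¹(b−μ) − β log|det Γ| + C, is non-increasing: dF/dt = −tr((−Σ⁻¹Γ + βΓ^{-T})ᵀ(−Σ⁻¹Γ + βΓ^{-T})) − |Σ⁻¹(μ−b)|² ≤ 0. -/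
open Matrix Real
open Finset in
lemma aux_det_deriv {d : ℕ} (Γ : ℝ → Matrix (Fin d) (Fin d) ℝ)
    (M : Matrix (Fin d) (Fin d) ℝ) (t : ℝ)
    (h : ∀ i j, HasDerivAt (fun s => Γ s i j) (M i j) t) :
    HasDerivAt (fun s => (Γ s).det) (Matrix.trace ((Γ t).adjugate * M)) t := by
  have key : HasDerivAt (fun s => ∑ σ : Equiv.Perm (Fin d),
      (Equiv.Perm.sign σ : ℤ) * ∏ i, Γ s (σ i) i)
      (∑ σ : Equiv.Perm (Fin d), (Equiv.Perm.sign σ : ℤ) *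
        ∑ i, (∏ j ∈ Finset.univ.erase i, Γ t (σ j) j) • M (σ i) i) t := by
    apply HasDerivAt.fun_sum
    intro σ _
    exact (HasDerivAt.fun_finsetProd (fun i _ => h (σ i) i)).const_mul _
  have e1 : (fun s => (Γ s).det) = (fun s => ∑ σ : Equiv.Perm (Fin d),
      (Equiv.Perm.sign σ : ℤ) * ∏ i, Γ s (σ i) i) := by
    funext s; rw [Matrix.det_apply']
  rw [e1]
  convert key using 1
  -- trace (adj Γ * M) = ∑ σ ...
  have : Matrix.trace ((Γ t).adjugate * M)
      = ∑ i, (((Γ t).adjugate) *ᵥ (fun k => M k i)) i := by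
    simp [Matrix.trace, Matrix.diag, Matrix.mul_apply, Matrix.mulVec, dotProduct]
  rw [this]
  have : ∀ i, (((Γ t).adjugate) *ᵥ (fun k => M k i)) i
      = ((Γ t).updateCol i (fun k => M k i)).det := by
    intro i
    rw [← Matrix.cramer_eq_adjugate_mulVec, Matrix.cramer_apply]
  simp_rw [this, Matrix.det_apply']
  rw [Finset.sum_comm]
  refine Finset.sum_congr rfl fun σ _ => ?_
  rw [Finset.mul_sum]
  refine Finset.sum_congr rfl fun i _ => ?_
  congr 1
  rw [← Finset.mul_prod_erase Finset.univ _ (Finset.mem_univ i)]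
  rw [Matrix.updateCol_self, smul_eq_mul, mul_comm]
  congr 1
  refine Finset.prod_congr rfl fun j hj => ?_
  rw [Matrix.updateCol_ne (Finset.ne_of_mem_erase hj)]

lemma aux_trace_sq_nonneg {d : ℕ} (M : Matrix (Fin d) (Fin d) ℝ) :
    0 ≤ Matrix.trace (Mᵀ * M) := by
  have : Matrix.trace (Mᵀ * M) = ∑ j, ∑ i, M i j * M i j := by
    simp [Matrix.trace, Matrix.diag, Matrix.mul_apply]
  rw [this]
  exact Finset.sum_nonneg fun j _ => Finset.sum_nonneg fun i _ => mul_self_nonneg _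

lemma aux_trace_identity {d : ℕ} (S G N M : Matrix (Fin d) (Fin d) ℝ) (β : ℝ)
    (hS : Sᵀ = S) (hM : M = -S * G + β • Nᵀ) :
    (1 / 2) * Matrix.trace (S * (M * Gᵀ + G * Mᵀ)) - β * Matrix.trace (N * M)
      = -Matrix.trace (Mᵀ * M) := by
  have t1 : Matrix.trace (S * (M * Gᵀ)) = Matrix.trace (Gᵀ * (S * M)) := by
    rw [← Matrix.mul_assoc, Matrix.trace_mul_comm]
  have t2 : Matrix.trace (S * (G * Mᵀ)) = Matrix.trace (Gᵀ * (S * M)) := by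
    rw [← Matrix.trace_transpose (S * (G * Mᵀ))]
    simp only [Matrix.transpose_mul, Matrix.transpose_transpose, hS]
    rw [Matrix.trace_mul_comm]; exact t1
  have t3 : Mᵀ * M = -(Gᵀ * (S * M)) + β • (N * M) := by
    nth_rewrite 1 [hM]
    simp only [Matrix.transpose_add, Matrix.transpose_neg, Matrix.transpose_mul,
      Matrix.transpose_smul, Matrix.transpose_transpose, hS, Matrix.add_mul,
      Matrix.neg_mul, Matrix.smul_mul, Matrix.mul_assoc]
  rw [Matrix.mul_add, Matrix.trace_add, t1, t2, t3, Matrix.trace_add,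
    Matrix.trace_neg, Matrix.trace_smul, smul_eq_mul]
  ring


/-- Along the flow `Γ' = −Σ⁻¹Γ + βΓ^{-T}`, `b' = Σ⁻¹(μ−b)`, the relative entropy
`F = ½tr(Σ⁻¹ΓΓᵀ) + ½(b−μ)ᵀΣ⁻¹(b−μ) − β log|det Γ| + C` is non-increasing:
`dF/dt = −tr(MᵀM) − |Σ⁻¹(μ−b)|² ≤ 0`, where `M = −Σ⁻¹Γ + βΓ^{-T}`. -/
theorem relative_entropy_dissipation (d : ℕ) (Sig : Matrix (Fin d) (Fin d) ℝ)
    (hSig : Sig.PosDef) (hSigSym : Sig.IsSymm)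
    (β : ℝ) (hβ : 0 < β) (μ : Fin d → ℝ) (C : ℝ)
    (Γ : ℝ → Matrix (Fin d) (Fin d) ℝ) (b : ℝ → Fin d → ℝ)
    (hinv : ∀ t, IsUnit (Γ t).det)
    (hΓ : ∀ t i j, HasDerivAt (fun s => Γ s i j)
      ((-Sig⁻¹ * Γ t + β • (Γ t)⁻¹ᵀ) i j) t)
    (hb : ∀ t i, HasDerivAt (fun s => b s i) (Sig⁻¹.mulVec (μ - b t) i) t)
    (F : ℝ → ℝ)
    (hF : ∀ t, F t = (1 / 2) * Matrix.trace (Sig⁻¹ * (Γ t * (Γ t)ᵀ))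
      + (1 / 2) * ((b t - μ) ⬝ᵥ Sig⁻¹.mulVec (b t - μ))
      - β * Real.log |(Γ t).det| + C) :
    ∀ t, HasDerivAt F
        (-Matrix.trace ((-Sig⁻¹ * Γ t + β • (Γ t)⁻¹ᵀ)ᵀ * (-Sig⁻¹ * Γ t + β • (Γ t)⁻¹ᵀ))
          - (Sig⁻¹.mulVec (μ - b t)) ⬝ᵥ (Sig⁻¹.mulVec (μ - b t))) t ∧
      (-Matrix.trace ((-Sig⁻¹ * Γ t + β • (Γ t)⁻¹ᵀ)ᵀ * (-Sig⁻¹ * Γ t + β • (Γ t)⁻¹ᵀ))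
          - (Sig⁻¹.mulVec (μ - b t)) ⬝ᵥ (Sig⁻¹.mulVec (μ - b t))) ≤ 0 := by
  intro t
  have hS : (Sig⁻¹)ᵀ = Sig⁻¹ := by
    rw [Matrix.transpose_nonsing_inv, hSigSym.eq]
  set M : Matrix (Fin d) (Fin d) ℝ := -Sig⁻¹ * Γ t + β • (Γ t)⁻¹ᵀ with hM
  set v : Fin d → ℝ := Sig⁻¹.mulVec (μ - b t) with hv
  -- Part 1 : trace term
  have h1 : HasDerivAt (fun s => Matrix.trace (Sig⁻¹ * (Γ s * (Γ s)ᵀ)))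
      (Matrix.trace (Sig⁻¹ * (M * (Γ t)ᵀ + Γ t * Mᵀ))) t := by
    have key : HasDerivAt (fun s => ∑ i, ∑ j, Sig⁻¹ i j * ∑ k, Γ s j k * Γ s i k)
        (∑ i, ∑ j, Sig⁻¹ i j * ∑ k,
          (M j k * Γ t i k + Γ t j k * M i k)) t := by
      refine HasDerivAt.fun_sum fun i _ => HasDerivAt.fun_sum fun j _ => ?_
      exact (HasDerivAt.fun_sum fun k _ => (hΓ t j k).mul (hΓ t i k)).const_mul _
    have e1 : (fun s => Matrix.trace (Sig⁻¹ * (Γ s * (Γ s)ᵀ)))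
        = (fun s => ∑ i, ∑ j, Sig⁻¹ i j * ∑ k, Γ s j k * Γ s i k) := by
      funext s
      simp [Matrix.trace, Matrix.diag, Matrix.mul_apply, Matrix.transpose_apply]
    rw [e1]
    convert key using 1
    simp [Matrix.trace, Matrix.diag, Matrix.mul_apply, Matrix.transpose_apply,
      Matrix.add_apply, Finset.sum_add_distrib, Finset.mul_sum]
  -- Part 2 : quadratic term
  have h2 : HasDerivAt (fun s => (b s - μ) ⬝ᵥ Sig⁻¹.mulVec (b s - μ))
      (-(2 * (v ⬝ᵥ v))) t := by
    have key : HasDerivAt (fun s => ∑ i, (b s i - μ i) * ∑ j, Sig⁻¹ i j * (b s j - μ j))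
        (∑ i, (v i * ∑ j, Sig⁻¹ i j * (b t j - μ j)
          + (b t i - μ i) * ∑ j, Sig⁻¹ i j * v j)) t := by
      refine HasDerivAt.fun_sum fun i _ => ?_
      exact ((hb t i).sub_const (μ i)).mul
        (HasDerivAt.fun_sum fun j _ => ((hb t j).sub_const (μ j)).const_mul _)
    have e2 : (fun s => (b s - μ) ⬝ᵥ Sig⁻¹.mulVec (b s - μ))
        = (fun s => ∑ i, (b s i - μ i) * ∑ j, Sig⁻¹ i j * (b s j - μ j)) := by
      funext s
      simp [dotProduct, Matrix.mulVec, Pi.sub_apply]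
    rw [e2]
    convert key using 1
    -- value identity
    have hSu : Sig⁻¹ *ᵥ (b t - μ) = -v := by
      rw [hv, ← Matrix.mulVec_neg, neg_sub]
    have huv : ∀ i, (∑ j, Sig⁻¹ i j * (b t j - μ j)) = -v i := by
      intro i
      have := congrFun hSu i
      simpa [Matrix.mulVec, dotProduct, Pi.sub_apply] using this
    have hvS : ∀ j, (∑ i, (b t i - μ i) * Sig⁻¹ i j) = -v j := by
      intro j
      have := congrFun hSu j
      have hsym : ∀ i, Sig⁻¹ i j = Sig⁻¹ j i := fun i =>
        (congrFun (congrFun hS.symm i) j).trans rfl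
      simp_rw [fun i => mul_comm ((b t) i - μ i) (Sig⁻¹ i j), hsym]
      simpa [Matrix.mulVec, dotProduct, Pi.sub_apply] using this
    simp_rw [huv]
    rw [Finset.sum_add_distrib]
    have swap : ∑ i, (b t i - μ i) * ∑ j, Sig⁻¹ i j * v j
        = ∑ j, (∑ i, (b t i - μ i) * Sig⁻¹ i j) * v j := by
      simp_rw [Finset.mul_sum, Finset.sum_mul]
      rw [Finset.sum_comm]
      apply Finset.sum_congr rfl; intro i _
      apply Finset.sum_congr rfl; intro j _
      ring
    rw [swap]
    simp_rw [hvS]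
    have hgen : ∀ (w : Fin d → ℝ), ∑ i, w i * -w i + ∑ j, -w j * w j
        = -(2 * ∑ i, w i * w i) := by
      intro w
      rw [Finset.mul_sum, ← Finset.sum_add_distrib, ← Finset.sum_neg_distrib]
      exact Finset.sum_congr rfl fun i _ => by ring
    simpa [dotProduct] using (hgen v).symm
  -- Part 3 : log det term
  have hdet : HasDerivAt (fun s => (Γ s).det)
      (Matrix.trace ((Γ t).adjugate * M)) t := aux_det_deriv Γ M t (hΓ t)
  have hne : (Γ t).det ≠ 0 := (hinv t).ne_zero
  have hlog : HasDerivAt (fun s => Real.log |(Γ s).det|)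
      (Matrix.trace ((Γ t)⁻¹ * M)) t := by
    have h := hdet.log hne
    have : Matrix.trace ((Γ t).adjugate * M) / (Γ t).det
        = Matrix.trace ((Γ t)⁻¹ * M) := by
      rw [Matrix.inv_def, Matrix.smul_mul, Matrix.trace_smul,
        Ring.inverse_eq_inv', smul_eq_mul, div_eq_inv_mul]
    rw [← this]
    simpa only [Real.log_abs] using h
  -- combine
  have hD : HasDerivAt F
      ((1 / 2) * Matrix.trace (Sig⁻¹ * (M * (Γ t)ᵀ + Γ t * Mᵀ))
        + (1 / 2) * (-(2 * (v ⬝ᵥ v)))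
        - β * Matrix.trace ((Γ t)⁻¹ * M)) t := by
    have hFeq : F = fun s => (1 / 2) * Matrix.trace (Sig⁻¹ * (Γ s * (Γ s)ᵀ))
      + (1 / 2) * ((b s - μ) ⬝ᵥ Sig⁻¹.mulVec (b s - μ))
      - β * Real.log |(Γ s).det| + C := funext hF
    rw [hFeq]
    exact (((h1.const_mul (1/2 : ℝ)).add (h2.const_mul (1/2 : ℝ))).sub
      (hlog.const_mul β)).add_const C
  have hident := aux_trace_identity Sig⁻¹ (Γ t) (Γ t)⁻¹ M β hS hM
  constructor
  · convert hD using 1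
    linarith [hident]
  · have h1 := aux_trace_sq_nonneg M
    have h2 : 0 ≤ v ⬝ᵥ v :=
      Finset.sum_nonneg fun i _ => mul_self_nonneg _
    linarith
end
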